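/- arXiv:2205.06685 — 2 statements merged into one kernel-verified Lean document; each statement's English description precedes it below -/
import Mathlib

section
/- Let a_1, a_2, a_3 be integers and let (s_n) be defined by s_0 = 3, s_1 = -a_1, s_2 = a_1^2 - 2a_2, and s_{n+3} + a_1 s_{n+2} + a_2 s_{n+1} + a_3 s_n = 0 for n ≥ 0. Let f(x) = x^3 + a_1 x^2 + a_2 x + a_3 and let p be a prime not dividing 6·disc(f)·(a_1^2 - 3a_2). Then: N_p(f) = 3 if and only if s_{p+1} ≡ a_1^2 - 2a_2 (mod p); N_p(f) = 0 if and only if s_{p+1} ≡ a_2 (mod p); and otherwise N_p(f) = 1. -/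
/-!
Over an algebraic closure of `𝔽_p` the cubic has roots `x, y, z`, pairwise distinct because
`p ∤ disc f`, and `s n ≡ x ^ n + y ^ n + z ^ n`. The Frobenius `t ↦ t ^ p` permutes the roots, its
fixed roots are exactly those lying in `𝔽_p`, and `s (p + 1) ≡ x ^ p * x + y ^ p * y + z ^ p * z`.
If the permutation is the identity, `N = 3` and this is `x² + y² + z² = a₁² - 2a₂`; if it is a
3-cycle, `N = 0` and it is `xy + yz + zx = a₂`; if it is a transposition, `N = 1` and it is neither.
The two values differ because `p ∤ a₁² - 3a₂`.
-/

open Finset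

theorem exists_cubic_vieta {K : Type*} [Field K] [IsAlgClosed K] (b c d : K) :
    ∃ x y z : K, x + y + z = -b ∧ x * y + x * z + y * z = c ∧ x * y * z = -d := by
  let P : Cubic K := ⟨1, b, c, d⟩
  obtain ⟨x, y, z, h3⟩ := (Cubic.splits_iff_roots_eq_three (φ := RingHom.id K) (P := P)
    one_ne_zero).mp (IsAlgClosed.splits _)
  have hb := Cubic.b_eq_three_roots one_ne_zero h3
  have hc := Cubic.c_eq_three_roots one_ne_zero h3
  have hd := Cubic.d_eq_three_roots one_ne_zero h3
  simp only [RingHom.id_apply, one_mul, P] at hb hc hd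
  exact ⟨x, y, z, by rw [hb, neg_neg], hc.symm, by rw [hd, neg_neg]⟩

section Vieta

variable {R : Type*} [CommRing R] {b c d x y z : R}

theorem cubic_eq_prod_of_vieta (h1 : x + y + z = -b) (h2 : x * y + x * z + y * z = c)
    (h3 : x * y * z = -d) (t : R) :
    t ^ 3 + b * t ^ 2 + c * t + d = (t - x) * (t - y) * (t - z) := by
  linear_combination t ^ 2 * h1 - t * h2 + h3

theorem cubic_eq_zero_iff_of_vieta [IsDomain R] [DecidableEq R] (h1 : x + y + z = -b)
    (h2 : x * y + x * z + y * z = c) (h3 : x * y * z = -d) (t : R) :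
    t ^ 3 + b * t ^ 2 + c * t + d = 0 ↔ t ∈ ({x, y, z} : Finset R) := by
  simp [cubic_eq_prod_of_vieta h1 h2 h3, sub_eq_zero, or_assoc]

theorem pairwise_ne_of_vieta_of_discr_ne_zero [IsDomain R] (h1 : x + y + z = -b)
    (h2 : x * y + x * z + y * z = c) (h3 : x * y * z = -d)
    (hdisc : 18 * b * c * d - 4 * b ^ 3 * d + b ^ 2 * c ^ 2 - 4 * c ^ 3 - 27 * d ^ 2 ≠ 0) :
    x ≠ y ∧ x ≠ z ∧ y ≠ z := by
  obtain rfl : b = -(x + y + z) := by linear_combination h1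
  obtain rfl : d = -(x * y * z) := by linear_combination h3
  subst h2
  have : ((x - y) * (x - z) * (y - z)) ^ 2 ≠ 0 := by
    convert hdisc using 1
    ring
  simpa [sub_eq_zero, and_assoc] using this

theorem intCast_eq_powerSum_of_vieta {a1 a2 a3 : ℤ} {s : ℕ → ℤ}
    (h0 : s 0 = 3) (h1 : s 1 = -a1) (h2 : s 2 = a1 ^ 2 - 2 * a2)
    (hrec : ∀ n, s (n + 3) + a1 * s (n + 2) + a2 * s (n + 1) + a3 * s n = 0)
    (e1 : x + y + z = -a1) (e2 : x * y + x * z + y * z = a2) (e3 : x * y * z = -a3) (n : ℕ) :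
    (s n : R) = x ^ n + y ^ n + z ^ n := by
  induction n using Nat.strong_induction_on with
  | _ n ih =>
    match n, ih with
    | 0, _ => norm_num [h0]
    | 1, _ => push_cast [h1]; linear_combination -e1
    | 2, _ => push_cast [h2]; linear_combination ((a1 : R) - x - y - z) * e1 + 2 * e2
    | n + 3, ih =>
      have hr : ((s (n + 3) + a1 * s (n + 2) + a2 * s (n + 1) + a3 * s n : ℤ) : R) = 0 := by
        rw [hrec n, Int.cast_zero]
      push_cast at hr
      linear_combination hr - (a1 : R) * ih (n + 2) (by omega) - (a2 : R) * ih (n + 1) (by omega)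
        - (a3 : R) * ih n (by omega) - x ^ n * cubic_eq_prod_of_vieta e1 e2 e3 x
        - y ^ n * cubic_eq_prod_of_vieta e1 e2 e3 y - z ^ n * cubic_eq_prod_of_vieta e1 e2 e3 z

end Vieta

section Frobenius

variable (p : ℕ) [Fact p.Prime] {K : Type*} [Field K] [CharP K p] [DecidableEq K]

theorem card_filter_castHom_mem_eq_card_filter_pow_eq_self (S : Finset K) :
    #{x : ZMod p | ZMod.castHom dvd_rfl K x ∈ S} = #{r ∈ S | r ^ p = r} := by
  rw [← card_image_of_injective _ (ZMod.castHom dvd_rfl K).injective]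
  congr 1
  ext r
  rw [mem_filter, ← Subfield.mem_bot_iff_pow_eq_self K p, ← ZMod.fieldRange_castHom_eq_bot p,
    RingHom.mem_fieldRange]
  simp only [mem_image, mem_filter, mem_univ, true_and]
  constructor
  · rintro ⟨x, hx, rfl⟩
    exact ⟨hx, x, rfl⟩
  · rintro ⟨hr, x, rfl⟩
    exact ⟨x, hr, rfl⟩

variable {a1 a2 a3 : ℤ} {x y z : K}

theorem card_roots_zmod_eq_card_fixed_of_vieta (e1 : x + y + z = -a1)
    (e2 : x * y + x * z + y * z = a2) (e3 : x * y * z = -a3) :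
    #{t : ZMod p | t ^ 3 + a1 * t ^ 2 + a2 * t + a3 = 0} =
      #{r ∈ ({x, y, z} : Finset K) | r ^ p = r} := by
  rw [← card_filter_castHom_mem_eq_card_filter_pow_eq_self]
  congr 1
  ext t
  simp only [mem_filter, mem_univ, true_and, ← cubic_eq_zero_iff_of_vieta e1 e2 e3]
  rw [← map_eq_zero_iff _ (ZMod.castHom dvd_rfl K).injective]
  simp

theorem pow_char_mem_of_vieta (e1 : x + y + z = -a1) (e2 : x * y + x * z + y * z = a2)
    (e3 : x * y * z = -a3) : ∀ r ∈ ({x, y, z} : Finset K), r ^ p ∈ ({x, y, z} : Finset K) := by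
  intro r hr
  rw [← cubic_eq_zero_iff_of_vieta e1 e2 e3] at hr ⊢
  have := congrArg (frobenius K p) hr
  simpa only [map_add, map_mul, map_pow, map_intCast, map_zero, frobenius_def] using this

end Frobenius

section Permutation

variable {K : Type*} [Field K] {x y z : K}

-- `T`, `A`, `B` are abstracted so that every relabelling of the roots discharges them by `ring`.
theorem swap_trace_ne {T A B : K} (hT : T = x ^ 2 + 2 * y * z) (hA : A = x ^ 2 + y ^ 2 + z ^ 2)
    (hB : B = x * y + y * z + z * x) (hxy : x ≠ y) (hxz : x ≠ z) (hyz : y ≠ z) :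
    T ≠ A ∧ T ≠ B := by
  subst hT hA hB
  constructor
  · intro h
    exact hyz (sub_eq_zero.mp (pow_eq_zero_iff two_ne_zero |>.mp (by linear_combination -h)))
  · intro h
    have : (x - y) * (x - z) = 0 := by linear_combination h
    rcases mul_eq_zero.mp this with h' | h'
    · exact hxy (sub_eq_zero.mp h')
    · exact hxz (sub_eq_zero.mp h')

theorem card_filter_fixed_trace_cases [DecidableEq K] (F : K → K) (hF : Function.Injective F)
    (hxy : x ≠ y) (hxz : x ≠ z) (hyz : y ≠ z)
    (hmaps : ∀ r ∈ ({x, y, z} : Finset K), F r ∈ ({x, y, z} : Finset K)) :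
    let N := #{r ∈ ({x, y, z} : Finset K) | F r = r}
    let T := F x * x + F y * y + F z * z
    (N = 3 ∧ T = x ^ 2 + y ^ 2 + z ^ 2) ∨ (N = 0 ∧ T = x * y + y * z + z * x) ∨
      (N = 1 ∧ T ≠ x ^ 2 + y ^ 2 + z ^ 2 ∧ T ≠ x * y + y * z + z * x) := by
  intro N T
  have hN : N = (if F x = x then 1 else 0) + (if F y = y then 1 else 0)
      + (if F z = z then 1 else 0) := by
    rw [show N = _ from card_filter _ _, sum_insert (by simp [hxy, hxz]),
      sum_insert (by simp [hyz]), sum_singleton, add_assoc]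
  have hdist : x ≠ y ∧ y ≠ x ∧ x ≠ z ∧ z ≠ x ∧ y ≠ z ∧ z ≠ y :=
    ⟨hxy, hxy.symm, hxz, hxz.symm, hyz, hyz.symm⟩
  have hx := hmaps x (by simp)
  have hy := hmaps y (by simp)
  have hz := hmaps z (by simp)
  simp only [mem_insert, mem_singleton] at hx hy hz
  rcases hx with hx | hx | hx <;> rcases hy with hy | hy | hy <;> rcases hz with hz | hz | hz
  all_goals first
    | exact absurd (hF (hx.trans hy.symm)) hxy
    | exact absurd (hF (hx.trans hz.symm)) hxz
    | exact absurd (hF (hy.trans hz.symm)) hyz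
    | skip
  · exact Or.inl ⟨by simp [hN, hx, hy, hz], by simp only [T, hx, hy, hz]; ring⟩
  · exact Or.inr <| Or.inr ⟨by simp [hN, hx, hy, hz, hdist],
      swap_trace_ne (by simp only [T, hx, hy, hz]; ring) (by ring) (by ring) hxy hxz hyz⟩
  · exact Or.inr <| Or.inr ⟨by simp [hN, hx, hy, hz, hdist],
      swap_trace_ne (by simp only [T, hx, hy, hz]; ring) (by ring) (by ring) hxz.symm hyz.symm hxy⟩
  · exact Or.inr <| Or.inl ⟨by simp [hN, hx, hy, hz, hdist], by simp only [T, hx, hy, hz]; ring⟩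
  · exact Or.inr <| Or.inl ⟨by simp [hN, hx, hy, hz, hdist], by simp only [T, hx, hy, hz]; ring⟩
  · exact Or.inr <| Or.inr ⟨by simp [hN, hx, hy, hz, hdist],
      swap_trace_ne (by simp only [T, hx, hy, hz]; ring) (by ring) (by ring) hxy.symm hyz hxz⟩

end Permutation

theorem trichotomy_of_cases {M : Type*} {N : ℕ} {T A B : M} (hAB : A ≠ B)
    (h : (N = 3 ∧ T = A) ∨ (N = 0 ∧ T = B) ∨ (N = 1 ∧ T ≠ A ∧ T ≠ B)) :
    (N = 3 ↔ T = A) ∧ (N = 0 ↔ T = B) ∧ (T ≠ A → T ≠ B → N = 1) := by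
  rcases h with ⟨rfl, rfl⟩ | ⟨rfl, rfl⟩ | ⟨rfl, hA, hB⟩
  · simp [hAB]
  · simp [hAB.symm]
  · simp [hA, hB]

theorem sun_power_sums (a1 a2 a3 : ℤ) (s : ℕ → ℤ)
    (h0 : s 0 = 3) (h1 : s 1 = -a1) (h2 : s 2 = a1 ^ 2 - 2 * a2)
    (hrec : ∀ n, s (n + 3) + a1 * s (n + 2) + a2 * s (n + 1) + a3 * s n = 0)
    (p : ℕ) [Fact p.Prime]
    (hpe : ¬ ((p : ℤ) ∣ 6 * (18 * a1 * a2 * a3 - 4 * a1 ^ 3 * a3 + a1 ^ 2 * a2 ^ 2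
      - 4 * a2 ^ 3 - 27 * a3 ^ 2) * (a1 ^ 2 - 3 * a2))) :
    let N := (Finset.univ.filter
      (fun x : ZMod p => x ^ 3 + (a1 : ZMod p) * x ^ 2 + (a2 : ZMod p) * x + (a3 : ZMod p) = 0)).card
    (N = 3 ↔ Int.ModEq (p : ℤ) (s (p + 1)) (a1 ^ 2 - 2 * a2)) ∧
    (N = 0 ↔ Int.ModEq (p : ℤ) (s (p + 1)) a2) ∧
    (¬ Int.ModEq (p : ℤ) (s (p + 1)) (a1 ^ 2 - 2 * a2) →
      ¬ Int.ModEq (p : ℤ) (s (p + 1)) a2 → N = 1) := by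
  intro N
  classical
  obtain ⟨x, y, z, e1, e2, e3⟩ := exists_cubic_vieta (K := AlgebraicClosure (ZMod p)) a1 a2 a3
  have hne := (CharP.intCast_eq_zero_iff (AlgebraicClosure (ZMod p)) p _).not.mpr hpe
  push_cast at hne
  simp only [mul_eq_zero, not_or] at hne
  obtain ⟨⟨-, hdisc⟩, hAB⟩ := hne
  obtain ⟨hxy, hxz, hyz⟩ := pairwise_ne_of_vieta_of_discr_ne_zero e1 e2 e3 hdisc
  have hT : (↑(s (p + 1)) : AlgebraicClosure (ZMod p)) = x ^ p * x + y ^ p * y + z ^ p * z := by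
    rw [intCast_eq_powerSum_of_vieta h0 h1 h2 hrec e1 e2 e3]
    ring
  have hA : ↑a1 ^ 2 - 2 * ↑a2 = x ^ 2 + y ^ 2 + z ^ 2 := by
    linear_combination (↑a1 - x - y - z) * e1 + 2 * e2
  have hB : ↑a2 = x * y + y * z + z * x := by linear_combination -e2
  have hcases := card_filter_fixed_trace_cases (· ^ p) (frobenius_inj _ p) hxy hxz hyz
    (pow_char_mem_of_vieta p e1 e2 e3)
  rw [← hA, ← hB, ← card_roots_zmod_eq_card_fixed_of_vieta p e1 e2 e3] at hcases
  simp only [← CharP.intCast_eq_intCast (AlgebraicClosure (ZMod p)) p, hT]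
  push_cast
  exact trichotomy_of_cases (fun h => hAB (by linear_combination h)) hcases
end

section
/- Let a_2, a_3 be integers and let (u_n) be defined by u_0 = 0, u_1 = -a_2, u_2 = -a_3, and u_{n+3} + a_2 u_{n+1} + a_3 u_n = 0 for n ≥ 0. Let f = x^3 + a_2 x + a_3, d = 9a_3^2 - 4a_2^3, and D = disc(f). Let p be a prime not dividing 6·D·a_2·a_3·((20a_2^3 a_3 + 27a_2^3 + 9a_2 d)^2 - d(31a_2^2 + d)^2). Then N_p(f) = 3 if and only if D·u_{p-1}^2 ≡ 0 (mod p); N_p(f) = 0 if and only if D·u_{p-1}^2 ≡ a_2^4 (mod p); and otherwise N_p(f) = 1. -/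
open Polynomial

set_option linter.unusedSectionVars false

lemma star_formula {K : Type*} [Field K] (a2 a3 : ℤ) (u : ℕ → ℤ)
    (h0 : u 0 = 0) (h1 : u 1 = -a2) (h2 : u 2 = -a3)
    (hrec : ∀ n, u (n + 3) + a2 * u (n + 1) + a3 * u n = 0)
    (X Y Z : K) (e1 : X + Y + Z = 0) (e2 : X * Y + X * Z + Y * Z = ((a2 : ℤ) : K))
    (e3 : X * Y * Z = -((a3 : ℤ) : K)) :
    ∀ n : ℕ, (X - Y) * (X - Z) * (Y - Z) * ((u n : ℤ) : K)
      = (Y - Z) * X ^ (n + 3) + (Z - X) * Y ^ (n + 3) + (X - Y) * Z ^ (n + 3) := by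
  have hZ : Z = -X - Y := by linear_combination e1
  subst hZ
  have hA2 : ((a2 : ℤ) : K) = -(X ^ 2) - X * Y - Y ^ 2 := by linear_combination -e2
  have hA3 : ((a3 : ℤ) : K) = X ^ 2 * Y + X * Y ^ 2 := by linear_combination e3
  suffices h : ∀ n : ℕ,
      ((X - Y) * (X - (-X - Y)) * (Y - (-X - Y)) * ((u n : ℤ) : K)
        = (Y - (-X - Y)) * X ^ (n + 3) + ((-X - Y) - X) * Y ^ (n + 3) + (X - Y) * (-X - Y) ^ (n + 3)) ∧
      ((X - Y) * (X - (-X - Y)) * (Y - (-X - Y)) * ((u (n+1) : ℤ) : K)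
        = (Y - (-X - Y)) * X ^ (n + 1 + 3) + ((-X - Y) - X) * Y ^ (n + 1 + 3) + (X - Y) * (-X - Y) ^ (n + 1 + 3)) ∧
      ((X - Y) * (X - (-X - Y)) * (Y - (-X - Y)) * ((u (n+2) : ℤ) : K)
        = (Y - (-X - Y)) * X ^ (n + 2 + 3) + ((-X - Y) - X) * Y ^ (n + 2 + 3) + (X - Y) * (-X - Y) ^ (n + 2 + 3)) by
    exact fun n => (h n).1
  intro n
  induction n with
  | zero =>
    refine ⟨?_, ?_, ?_⟩
    · rw [h0]; push_cast; ring
    · rw [h1]; push_cast; rw [hA2]; ring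
    · rw [h2]; push_cast; rw [hA3]; ring
  | succ n ih =>
    refine ⟨ih.2.1, ih.2.2, ?_⟩
    have hr : ((u (n + 3) : ℤ) : K) = -((a2:ℤ):K) * ((u (n+1) : ℤ) : K) - ((a3:ℤ):K) * ((u n : ℤ) : K) := by
      have := hrec n
      have h' : ((u (n+3) + a2 * u (n+1) + a3 * u n : ℤ) : K) = ((0 : ℤ) : K) := by rw [this]
      push_cast at h'
      linear_combination h'
    rw [hA2, hA3] at hr
    show (X - Y) * (X - (-X - Y)) * (Y - (-X - Y)) * ((u (n+3) : ℤ) : K)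
        = (Y - (-X - Y)) * X ^ (n + 3 + 3) + ((-X - Y) - X) * Y ^ (n + 3 + 3) + (X - Y) * (-X - Y) ^ (n + 3 + 3)
    rw [hr]
    linear_combination (-(-(X ^ 2) - X * Y - Y ^ 2)) * ih.2.1 + (-(X ^ 2 * Y + X * Y ^ 2)) * ih.1



lemma frob_fix {p : ℕ} [Fact p.Prime] {K : Type*} [Field K] [Algebra (ZMod p) K]
    (w : K) (hw : w ^ p = w) : ∃ t : ZMod p, algebraMap (ZMod p) K t = w := by
  classical
  by_contra hc
  push_neg at hc
  have hp2 : 2 ≤ p := (Fact.out : p.Prime).two_le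
  set g : K[X] := X ^ p - X with hg
  have hdeg : g.natDegree = p := by
    rw [hg]
    rw [Polynomial.natDegree_sub_eq_left_of_natDegree_lt]
    · exact natDegree_X_pow p
    · rw [natDegree_X, natDegree_X_pow]; omega
  have hg0 : g ≠ 0 := by
    intro h
    rw [h] at hdeg
    simp at hdeg
    omega
  have hrootsmem : ∀ v : K, v ^ p = v → v ∈ g.roots.toFinset := by
    intro v hv
    rw [Multiset.mem_toFinset, mem_roots hg0]
    simp [hg, IsRoot, hv]
  set s : Finset K := insert w (Finset.univ.image (algebraMap (ZMod p) K)) with hs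
  have hwni : w ∉ Finset.univ.image (algebraMap (ZMod p) K) := by
    simp only [Finset.mem_image]
    rintro ⟨t, -, ht⟩
    exact hc t ht
  have hscard : s.card = p + 1 := by
    rw [hs, Finset.card_insert_of_notMem hwni,
      Finset.card_image_of_injective _ (algebraMap (ZMod p) K).injective,
      Finset.card_univ, ZMod.card]
  have hsub : s ⊆ g.roots.toFinset := by
    intro v hv
    rw [hs, Finset.mem_insert] at hv
    rcases hv with rfl | hv
    · exact hrootsmem v hw
    · simp only [Finset.mem_image] at hv
      obtain ⟨t, -, rfl⟩ := hv
      refine hrootsmem _ ?_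
      rw [← map_pow, ZMod.pow_card]
  have := (Finset.card_le_card hsub).trans ((Multiset.toFinset_card_le _).trans (g.card_roots'.trans_eq hdeg))
  omega

section
variable {p : ℕ} [Fact p.Prime] {K : Type*} [Field K] [Algebra (ZMod p) K]

lemma root_iff (a2 a3 : ℤ) (X Y Z : K)
    (hfac : ∀ w : K, w ^ 3 + ((a2 : ℤ) : K) * w + ((a3 : ℤ) : K) = (w - X) * (w - Y) * (w - Z))
    (t : ZMod p) :
    (t ^ 3 + (a2 : ZMod p) * t + (a3 : ZMod p) = 0) ↔
      (algebraMap (ZMod p) K t = X ∨ algebraMap (ZMod p) K t = Y ∨ algebraMap (ZMod p) K t = Z) := by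
  have hinj := (algebraMap (ZMod p) K).injective
  have h1 : (t ^ 3 + (a2 : ZMod p) * t + (a3 : ZMod p) = 0) ↔
      algebraMap (ZMod p) K (t ^ 3 + (a2 : ZMod p) * t + (a3 : ZMod p)) = algebraMap (ZMod p) K 0 :=
    ⟨fun h => by rw [h], fun h => hinj h⟩
  rw [h1]
  have h2 : algebraMap (ZMod p) K (t ^ 3 + (a2 : ZMod p) * t + (a3 : ZMod p))
      = (algebraMap (ZMod p) K t - X) * (algebraMap (ZMod p) K t - Y) * (algebraMap (ZMod p) K t - Z) := by
    rw [← hfac]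
    push_cast [map_add, map_mul, map_pow, map_intCast]
    ring
  rw [h2, map_zero, mul_eq_zero, mul_eq_zero, sub_eq_zero, sub_eq_zero, sub_eq_zero, or_assoc]

lemma frob_inj (a b : K) [CharP K p] (h : a ^ p = b ^ p) : a = b := by
  have h2 : (a - b) ^ p = 0 := by rw [sub_pow_char, h, sub_self]
  have h3 := pow_eq_zero_iff (n := p) (Fact.out : p.Prime).ne_zero |>.mp h2
  linear_combination h3

end

section
set_option linter.unusedSectionVars false
variable {p : ℕ} [Fact p.Prime] {K : Type*} [Field K] [Algebra (ZMod p) K] [CharP K p]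

lemma emb_pow_card (t : ZMod p) : (algebraMap (ZMod p) K t) ^ p = algebraMap (ZMod p) K t := by
  rw [← map_pow, ZMod.pow_card]

lemma count_three (a2 a3 : ℤ) (X Y Z : K)
    (hfac : ∀ w : K, w ^ 3 + ((a2 : ℤ) : K) * w + ((a3 : ℤ) : K) = (w - X) * (w - Y) * (w - Z))
    (hXY : X ≠ Y) (hXZ : X ≠ Z) (hYZ : Y ≠ Z)
    (hX : X ^ p = X) (hY : Y ^ p = Y) (hZ : Z ^ p = Z) :
    (Finset.univ.filter
      (fun x : ZMod p => x ^ 3 + (a2 : ZMod p) * x + (a3 : ZMod p) = 0)).card = 3 := by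
  obtain ⟨tx, htx⟩ := frob_fix X hX
  obtain ⟨ty, hty⟩ := frob_fix Y hY
  obtain ⟨tz, htz⟩ := frob_fix Z hZ
  have hinj := (algebraMap (ZMod p) K).injective
  have hfe : (Finset.univ.filter
      (fun x : ZMod p => x ^ 3 + (a2 : ZMod p) * x + (a3 : ZMod p) = 0)) = {tx, ty, tz} := by
    ext t
    simp only [Finset.mem_filter, Finset.mem_univ, true_and, Finset.mem_insert,
      Finset.mem_singleton]
    rw [root_iff a2 a3 X Y Z hfac t]
    constructor
    · rintro (h | h | h)
      · exact Or.inl (hinj (h.trans htx.symm))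
      · exact Or.inr (Or.inl (hinj (h.trans hty.symm)))
      · exact Or.inr (Or.inr (hinj (h.trans htz.symm)))
    · rintro (rfl | rfl | rfl)
      · exact Or.inl htx
      · exact Or.inr (Or.inl hty)
      · exact Or.inr (Or.inr htz)
  rw [hfe]
  have h1 : tx ≠ ty := fun h => hXY (by rw [← htx, ← hty, h])
  have h2 : tx ≠ tz := fun h => hXZ (by rw [← htx, ← htz, h])
  have h3 : ty ≠ tz := fun h => hYZ (by rw [← hty, ← htz, h])
  rw [Finset.card_insert_of_notMem (by simp [h1, h2]),
    Finset.card_insert_of_notMem (by simp [h3]), Finset.card_singleton]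

lemma count_one (a2 a3 : ℤ) (X Y Z : K)
    (hfac : ∀ w : K, w ^ 3 + ((a2 : ℤ) : K) * w + ((a3 : ℤ) : K) = (w - X) * (w - Y) * (w - Z))
    (hYZ : Y ≠ Z) (hX : X ^ p = X) (hY : Y ^ p = Z) :
    (Finset.univ.filter
      (fun x : ZMod p => x ^ 3 + (a2 : ZMod p) * x + (a3 : ZMod p) = 0)).card = 1 := by
  obtain ⟨tx, htx⟩ := frob_fix X hX
  have hinj := (algebraMap (ZMod p) K).injective
  have hfe : (Finset.univ.filter
      (fun x : ZMod p => x ^ 3 + (a2 : ZMod p) * x + (a3 : ZMod p) = 0)) = {tx} := by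
    ext t
    simp only [Finset.mem_filter, Finset.mem_univ, true_and, Finset.mem_singleton]
    rw [root_iff a2 a3 X Y Z hfac t]
    constructor
    · rintro (h | h | h)
      · exact hinj (h.trans htx.symm)
      · exfalso; apply hYZ
        have : Y ^ p = Y := by rw [← h, emb_pow_card]
        rw [← hY, this]
      · exfalso; apply hYZ
        have hZp : Z ^ p = Z := by rw [← h, emb_pow_card]
        exact frob_inj Y Z (hY.trans hZp.symm)
    · rintro rfl
      exact Or.inl htx
  rw [hfe, Finset.card_singleton]

lemma count_zero (a2 a3 : ℤ) (X Y Z : K)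
    (hfac : ∀ w : K, w ^ 3 + ((a2 : ℤ) : K) * w + ((a3 : ℤ) : K) = (w - X) * (w - Y) * (w - Z))
    (hXY : X ≠ Y) (hYZ : Y ≠ Z) (hZX : Z ≠ X)
    (hX : X ^ p = Y) (hY : Y ^ p = Z) (hZ : Z ^ p = X) :
    (Finset.univ.filter
      (fun x : ZMod p => x ^ 3 + (a2 : ZMod p) * x + (a3 : ZMod p) = 0)).card = 0 := by
  rw [Finset.card_eq_zero]
  ext t
  simp only [Finset.mem_filter, Finset.mem_univ, true_and, Finset.notMem_empty, iff_false]
  rw [root_iff a2 a3 X Y Z hfac t]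
  rintro (h | h | h)
  · exact hXY (by rw [← hX, ← h, emb_pow_card, h])
  · exact hYZ (by rw [← hY, ← h, emb_pow_card, h])
  · exact hZX (by rw [← hZ, ← h, emb_pow_card, h])

end


section
set_option linter.unusedSectionVars false
variable {p : ℕ} [Fact p.Prime] {K : Type*} [Field K] [Algebra (ZMod p) K] [CharP K p]

lemma neg_pow_charp (a : K) : (-a) ^ p = -(a ^ p) := by
  rw [show -a = 0 - a by ring, sub_pow_char, zero_pow (Fact.out : p.Prime).ne_zero, zero_sub]

lemma case_id (a2 a3 D U : ℤ) (hD : D = -4 * a2 ^ 3 - 27 * a3 ^ 2)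
    (hcast : ∀ m n : ℤ, ((m : K) = (n : K)) ↔ Int.ModEq (p : ℤ) m n)
    (X Y Z : K) (e1 : X + Y + Z = 0) (e2 : X * Y + X * Z + Y * Z = ((a2 : ℤ) : K))
    (e3 : X * Y * Z = -((a3 : ℤ) : K))
    (hstar : (X - Y) * (X - Z) * (Y - Z) * ((U : ℤ) : K)
      = (Y - Z) * X ^ (p - 1 + 3) + (Z - X) * Y ^ (p - 1 + 3) + (X - Y) * Z ^ (p - 1 + 3))
    (hX : X ^ p = X) (hY : Y ^ p = Y) (hZ : Z ^ p = Z) :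
    Int.ModEq (p : ℤ) (D * U ^ 2) 0 := by
  have hZe : Z = -X - Y := by linear_combination e1
  subst hZe
  have hA2 : ((a2 : ℤ) : K) = -(X ^ 2) - X * Y - Y ^ 2 := by linear_combination -e2
  have hA3 : ((a3 : ℤ) : K) = X ^ 2 * Y + X * Y ^ 2 := by linear_combination e3
  have hm : p - 1 + 3 = p + 2 := by have := (Fact.out : p.Prime).two_le; omega
  rw [hm] at hstar
  simp only [pow_add] at hstar
  rw [hX, hY, hZ] at hstar
  have hDK2 : ((D : ℤ) : K) = ((X - Y) * (X - (-X - Y)) * (Y - (-X - Y))) ^ 2 := by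
    rw [hD]; push_cast; rw [hA2, hA3]; ring
  rw [← hcast]
  push_cast
  calc ((D : ℤ) : K) * ((U : ℤ) : K) ^ 2
      = ((X - Y) * (X - (-X - Y)) * (Y - (-X - Y)) * ((U : ℤ) : K)) ^ 2 := by
        rw [hDK2]; ring
    _ = 0 := by rw [hstar]; ring

lemma case_cyc (a2 a3 D U : ℤ) (hD : D = -4 * a2 ^ 3 - 27 * a3 ^ 2)
    (hcast : ∀ m n : ℤ, ((m : K) = (n : K)) ↔ Int.ModEq (p : ℤ) m n)
    (X Y Z : K) (e1 : X + Y + Z = 0) (e2 : X * Y + X * Z + Y * Z = ((a2 : ℤ) : K))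
    (e3 : X * Y * Z = -((a3 : ℤ) : K))
    (hstar : (X - Y) * (X - Z) * (Y - Z) * ((U : ℤ) : K)
      = (Y - Z) * X ^ (p - 1 + 3) + (Z - X) * Y ^ (p - 1 + 3) + (X - Y) * Z ^ (p - 1 + 3))
    (hX : X ^ p = Y) (hY : Y ^ p = Z) (hZ : Z ^ p = X) :
    Int.ModEq (p : ℤ) (D * U ^ 2) (a2 ^ 4) := by
  have hZe : Z = -X - Y := by linear_combination e1
  subst hZe
  have hA2 : ((a2 : ℤ) : K) = -(X ^ 2) - X * Y - Y ^ 2 := by linear_combination -e2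
  have hA3 : ((a3 : ℤ) : K) = X ^ 2 * Y + X * Y ^ 2 := by linear_combination e3
  have hm : p - 1 + 3 = p + 2 := by have := (Fact.out : p.Prime).two_le; omega
  rw [hm] at hstar
  simp only [pow_add] at hstar
  rw [hX, hY, hZ] at hstar
  have hDK2 : ((D : ℤ) : K) = ((X - Y) * (X - (-X - Y)) * (Y - (-X - Y))) ^ 2 := by
    rw [hD]; push_cast; rw [hA2, hA3]; ring
  rw [← hcast]
  push_cast
  calc ((D : ℤ) : K) * ((U : ℤ) : K) ^ 2
      = ((X - Y) * (X - (-X - Y)) * (Y - (-X - Y)) * ((U : ℤ) : K)) ^ 2 := by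
        rw [hDK2]; ring
    _ = ((a2 : ℤ) : K) ^ 4 := by rw [hstar, hA2]; ring

lemma case_swap (a2 a3 D U : ℤ) (hD : D = -4 * a2 ^ 3 - 27 * a3 ^ 2)
    (hcast : ∀ m n : ℤ, ((m : K) = (n : K)) ↔ Int.ModEq (p : ℤ) m n)
    (hA2ne : ((a2 : ℤ) : K) ≠ 0) (hA3ne : ((a3 : ℤ) : K) ≠ 0) (h2ne : (2 : K) ≠ 0)
    (hA2frob : ((a2 : ℤ) : K) ^ p = ((a2 : ℤ) : K))
    (X Y Z : K) (e1 : X + Y + Z = 0) (e2 : X * Y + X * Z + Y * Z = ((a2 : ℤ) : K))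
    (e3 : X * Y * Z = -((a3 : ℤ) : K))
    (hYZ : Y ≠ Z)
    (hstar : (X - Y) * (X - Z) * (Y - Z) * ((U : ℤ) : K)
      = (Y - Z) * X ^ (p - 1 + 3) + (Z - X) * Y ^ (p - 1 + 3) + (X - Y) * Z ^ (p - 1 + 3))
    (hX : X ^ p = X) (hY : Y ^ p = Z) (hZ : Z ^ p = Y) :
    ¬ Int.ModEq (p : ℤ) (D * U ^ 2) 0 ∧ ¬ Int.ModEq (p : ℤ) (D * U ^ 2) (a2 ^ 4) := by
  have hZe : Z = -X - Y := by linear_combination e1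
  subst hZe
  have hA2 : ((a2 : ℤ) : K) = -(X ^ 2) - X * Y - Y ^ 2 := by linear_combination -e2
  have hA3 : ((a3 : ℤ) : K) = X ^ 2 * Y + X * Y ^ 2 := by linear_combination e3
  have hm : p - 1 + 3 = p + 2 := by have := (Fact.out : p.Prime).two_le; omega
  rw [hm] at hstar
  simp only [pow_add] at hstar
  rw [hX, hY, hZ] at hstar
  have hDK2 : ((D : ℤ) : K) = ((X - Y) * (X - (-X - Y)) * (Y - (-X - Y))) ^ 2 := by
    rw [hD]; push_cast; rw [hA2, hA3]; ring
  have hRw : (X - Y) * (X - (-X - Y)) * (Y - (-X - Y)) * ((U : ℤ) : K)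
      = -((a2 : ℤ) : K) * (X * (Y - (-X - Y))) := by
    rw [hstar, hA2]; ring
  have hXne : X ≠ 0 := by
    intro h; apply hA3ne; rw [h] at e3; linear_combination e3
  have hYZne : Y - (-X - Y) ≠ 0 := sub_ne_zero.mpr hYZ
  have hwne : X * (Y - (-X - Y)) ≠ 0 := mul_ne_zero hXne hYZne
  have hwp : (X * (Y - (-X - Y))) ^ p = -(X * (Y - (-X - Y))) := by
    rw [mul_pow, hX, sub_pow_char, hY, hZ]; ring
  constructor
  · intro hc
    rw [← hcast] at hc
    push_cast at hc
    rw [hDK2] at hc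
    have h6 : (-((a2 : ℤ) : K) * (X * (Y - (-X - Y)))) ^ 2 = 0 := by
      rw [← hRw]; linear_combination hc
    have h7 := pow_eq_zero_iff (n := 2) (by norm_num) |>.mp h6
    rcases mul_eq_zero.mp h7 with h | h
    · exact hA2ne (by linear_combination -h)
    · exact hwne h
  · intro hc
    rw [← hcast] at hc
    push_cast at hc
    rw [hDK2] at hc
    have h6 : (-((a2 : ℤ) : K) * (X * (Y - (-X - Y)))) ^ 2 = ((a2 : ℤ) : K) ^ 4 := by
      rw [← hRw]; linear_combination hc
    have h7 : ((a2 : ℤ) : K) ^ 2 *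
        ((X * (Y - (-X - Y))) ^ 2 - ((a2 : ℤ) : K) ^ 2) = 0 := by linear_combination h6
    have h8 : (X * (Y - (-X - Y))) ^ 2 - ((a2 : ℤ) : K) ^ 2 = 0 := by
      rcases mul_eq_zero.mp h7 with h | h
      · exact absurd (pow_eq_zero_iff (n := 2) (by norm_num) |>.mp h) hA2ne
      · exact h
    have h9 : (X * (Y - (-X - Y)) - ((a2 : ℤ) : K)) * (X * (Y - (-X - Y)) + ((a2 : ℤ) : K)) = 0 := by
      linear_combination h8
    rcases mul_eq_zero.mp h9 with h | h
    · have hw : X * (Y - (-X - Y)) = ((a2 : ℤ) : K) := by linear_combination h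
      rw [hw, hA2frob] at hwp
      have h10 : (2 : K) * ((a2 : ℤ) : K) = 0 := by linear_combination hwp
      rcases mul_eq_zero.mp h10 with h' | h'
      · exact h2ne h'
      · exact hA2ne h'
    · have hw : X * (Y - (-X - Y)) = -((a2 : ℤ) : K) := by linear_combination h
      rw [hw, neg_pow_charp, hA2frob] at hwp
      have h10 : (2 : K) * ((a2 : ℤ) : K) = 0 := by linear_combination -hwp
      rcases mul_eq_zero.mp h10 with h' | h'
      · exact h2ne h'
      · exact hA2ne h'

end

set_option maxHeartbeats 1000000 in
theorem depressed_cubic_recurrence (a2 a3 : ℤ) (u : ℕ → ℤ)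
    (h0 : u 0 = 0) (h1 : u 1 = -a2) (h2 : u 2 = -a3)
    (hrec : ∀ n, u (n + 3) + a2 * u (n + 1) + a3 * u n = 0)
    (d D : ℤ) (hd : d = 9 * a3 ^ 2 - 4 * a2 ^ 3) (hD : D = -4 * a2 ^ 3 - 27 * a3 ^ 2)
    (p : ℕ) [Fact p.Prime]
    (hpe : ¬ ((p : ℤ) ∣ 6 * D * a2 * a3 *
      ((20 * a2 ^ 3 * a3 + 27 * a2 ^ 3 + 9 * a2 * d) ^ 2 - d * (31 * a2 ^ 2 + d) ^ 2))) :
    let N := (Finset.univ.filter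
      (fun x : ZMod p => x ^ 3 + (a2 : ZMod p) * x + (a3 : ZMod p) = 0)).card
    (N = 3 ↔ Int.ModEq (p : ℤ) (D * u (p - 1) ^ 2) 0) ∧
    (N = 0 ↔ Int.ModEq (p : ℤ) (D * u (p - 1) ^ 2) (a2 ^ 4)) ∧
    (¬ Int.ModEq (p : ℤ) (D * u (p - 1) ^ 2) 0 →
      ¬ Int.ModEq (p : ℤ) (D * u (p - 1) ^ 2) (a2 ^ 4) → N = 1) := by
  intro N
  have hp : p.Prime := Fact.out
  have h6' : ¬ (p:ℤ) ∣ 6 := fun h => hpe ((((h.mul_right D).mul_right a2).mul_right a3).mul_right _)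
  have hDd : ¬ (p:ℤ) ∣ D := fun h => hpe ((((h.mul_left 6).mul_right a2).mul_right a3).mul_right _)
  have ha2d : ¬ (p:ℤ) ∣ a2 := fun h => hpe (((h.mul_left (6*D)).mul_right a3).mul_right _)
  have ha3d : ¬ (p:ℤ) ∣ a3 := fun h => hpe ((h.mul_left (6*D*a2)).mul_right _)
  set K := AlgebraicClosure (ZMod p) with hK
  haveI : CharP K p := charP_of_injective_algebraMap (algebraMap (ZMod p) K).injective p
  have hcast : ∀ m n : ℤ, ((m : K) = (n : K)) ↔ Int.ModEq (p:ℤ) m n := by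
    intro m n
    constructor
    · intro h
      have h2' : algebraMap (ZMod p) K ((m : ZMod p)) = algebraMap (ZMod p) K ((n : ZMod p)) := by
        rw [map_intCast, map_intCast]; exact h
      exact (ZMod.intCast_eq_intCast_iff _ _ _).mp ((algebraMap (ZMod p) K).injective h2')
    · intro h
      calc (m : K) = algebraMap (ZMod p) K ((m : ZMod p)) := (map_intCast _ _).symm
        _ = algebraMap (ZMod p) K ((n : ZMod p)) := by
            rw [(ZMod.intCast_eq_intCast_iff _ _ _).mpr h]
        _ = (n : K) := map_intCast _ _
  have hcast0 : ∀ m : ℤ, ((m : K) = 0) ↔ (p:ℤ) ∣ m := by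
    intro m
    rw [show (0 : K) = ((0:ℤ) : K) by norm_num, hcast m 0]
    exact Int.modEq_zero_iff_dvd
  have hA2ne : ((a2 : ℤ) : K) ≠ 0 := fun h => ha2d ((hcast0 a2).mp h)
  have hA3ne : ((a3 : ℤ) : K) ≠ 0 := fun h => ha3d ((hcast0 a3).mp h)
  have h2ne : (2 : K) ≠ 0 := by
    have h22 : ¬ (p:ℤ) ∣ 2 := fun h => h6' (h.trans (by norm_num))
    intro h
    exact h22 ((hcast0 2).mp (by exact_mod_cast h))
  have ha : (⟨1, 0, (a2 : ZMod p), (a3 : ZMod p)⟩ : Cubic (ZMod p)).a ≠ 0 := one_ne_zero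
  have hsplits : Polynomial.Splits
      ((⟨1, 0, (a2 : ZMod p), (a3 : ZMod p)⟩ : Cubic (ZMod p)).toPoly.map (algebraMap (ZMod p) K)) :=
    IsAlgClosed.splits _
  obtain ⟨X, Y, Z, h3⟩ := (Cubic.splits_iff_roots_eq_three ha).mp hsplits
  have hb := Cubic.b_eq_three_roots ha h3
  have hcc := Cubic.c_eq_three_roots ha h3
  have hdd := Cubic.d_eq_three_roots ha h3
  simp only [map_one, map_zero, one_mul, map_intCast] at hb hcc hdd
  have e1 : X + Y + Z = 0 := by linear_combination hb
  have e2 : X * Y + X * Z + Y * Z = ((a2 : ℤ) : K) := by linear_combination -hcc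
  have e3 : X * Y * Z = -((a3 : ℤ) : K) := by linear_combination hdd
  have hdisc : (⟨1, 0, (a2 : ZMod p), (a3 : ZMod p)⟩ : Cubic (ZMod p)).discr = ((D : ℤ) : ZMod p) := by
    rw [hD]; simp only [Cubic.discr]; push_cast; ring
  have hdiscne : (⟨1, 0, (a2 : ZMod p), (a3 : ZMod p)⟩ : Cubic (ZMod p)).discr ≠ 0 := by
    rw [hdisc]
    intro h
    exact hDd ((ZMod.intCast_zmod_eq_zero_iff_dvd D p).mp h)
  obtain ⟨hXY, hXZ, hYZ⟩ := (Cubic.discr_ne_zero_iff_roots_ne ha h3).mp hdiscne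
  have hfac : ∀ w : K, w ^ 3 + ((a2:ℤ):K) * w + ((a3:ℤ):K) = (w - X) * (w - Y) * (w - Z) := by
    intro w
    linear_combination w ^ 2 * e1 - w * e2 + e3
  have hA2frob : ((a2:ℤ):K) ^ p = ((a2:ℤ):K) := by
    rw [show ((a2:ℤ):K) = algebraMap (ZMod p) K ((a2:ℤ) : ZMod p) from (map_intCast _ _).symm,
      ← map_pow, ZMod.pow_card]
  have hA3frob : ((a3:ℤ):K) ^ p = ((a3:ℤ):K) := by
    rw [show ((a3:ℤ):K) = algebraMap (ZMod p) K ((a3:ℤ) : ZMod p) from (map_intCast _ _).symm,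
      ← map_pow, ZMod.pow_card]
  have hfrobroot : ∀ w : K, w^3 + ((a2:ℤ):K)*w + ((a3:ℤ):K) = 0 →
      (w^p)^3 + ((a2:ℤ):K)*(w^p) + ((a3:ℤ):K) = 0 := by
    intro w hw
    have h' : (w^3 + ((a2:ℤ):K)*w + ((a3:ℤ):K))^p = 0 := by
      rw [hw]; exact zero_pow hp.ne_zero
    rw [add_pow_char, add_pow_char, mul_pow, hA2frob, hA3frob, pow_right_comm] at h'
    exact h'
  have hmem : ∀ w : K, w^3 + ((a2:ℤ):K)*w + ((a3:ℤ):K) = 0 → (w = X ∨ w = Y ∨ w = Z) := by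
    intro w hw
    have h' : (w - X) * (w - Y) * (w - Z) = 0 := by rw [← hfac w]; exact hw
    rcases mul_eq_zero.mp h' with h'' | h''
    · rcases mul_eq_zero.mp h'' with h4 | h4
      · exact Or.inl (sub_eq_zero.mp h4)
      · exact Or.inr (Or.inl (sub_eq_zero.mp h4))
    · exact Or.inr (Or.inr (sub_eq_zero.mp h''))
  have hXroot : X^3 + ((a2:ℤ):K)*X + ((a3:ℤ):K) = 0 := by rw [hfac X]; ring
  have hYroot : Y^3 + ((a2:ℤ):K)*Y + ((a3:ℤ):K) = 0 := by rw [hfac Y]; ring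
  have hZroot : Z^3 + ((a2:ℤ):K)*Z + ((a3:ℤ):K) = 0 := by rw [hfac Z]; ring
  have hXp := hmem _ (hfrobroot X hXroot)
  have hYp := hmem _ (hfrobroot Y hYroot)
  have hZp := hmem _ (hfrobroot Z hZroot)
  have hstar0 := star_formula a2 a3 u h0 h1 h2 hrec X Y Z e1 e2 e3 (p - 1)
  have finj : ∀ a b : K, a ^ p = b ^ p → a = b := fun a b h => frob_inj a b h
  have hexcl : ¬ (Int.ModEq (p:ℤ) (D * u (p-1) ^ 2) 0 ∧
      Int.ModEq (p:ℤ) (D * u (p-1) ^ 2) (a2 ^ 4)) := by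
    rintro ⟨hc0, hc4⟩
    have hz : Int.ModEq (p:ℤ) (a2^4) 0 := hc4.symm.trans hc0
    have hdvd : (p:ℤ) ∣ a2^4 := Int.modEq_zero_iff_dvd.mp hz
    exact ha2d ((Nat.prime_iff_prime_int.mp hp).dvd_of_dvd_pow hdvd)
  suffices hTri : (N = 3 ∧ Int.ModEq (p:ℤ) (D * u (p-1) ^ 2) 0) ∨
      (N = 0 ∧ Int.ModEq (p:ℤ) (D * u (p-1) ^ 2) (a2 ^ 4)) ∨
      (N = 1 ∧ ¬ Int.ModEq (p:ℤ) (D * u (p-1) ^ 2) 0 ∧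
        ¬ Int.ModEq (p:ℤ) (D * u (p-1) ^ 2) (a2 ^ 4)) by
    rcases hTri with ⟨hn, hc⟩ | ⟨hn, hc⟩ | ⟨hn, hc0', hc4'⟩
    · exact ⟨⟨fun _ => hc, fun _ => hn⟩,
        ⟨fun h => by omega, fun h => absurd ⟨hc, h⟩ hexcl⟩,
        fun hh _ => absurd hc hh⟩
    · exact ⟨⟨fun h => by omega, fun h => absurd ⟨h, hc⟩ hexcl⟩,
        ⟨fun _ => hc, fun _ => hn⟩,
        fun _ h4 => absurd hc h4⟩
    · exact ⟨⟨fun h => by omega, fun h => absurd h hc0'⟩,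
        ⟨fun h => by omega, fun h => absurd h hc4'⟩,
        fun _ _ => hn⟩
  rcases hXp with hX | hX | hX <;> rcases hYp with hY | hY | hY <;>
    rcases hZp with hZ | hZ | hZ
  all_goals first
    | exact absurd (finj X Y (hX.trans hY.symm)) hXY
    | exact absurd (finj X Z (hX.trans hZ.symm)) hXZ
    | exact absurd (finj Y Z (hY.trans hZ.symm)) hYZ
    | exact Or.inl ⟨count_three a2 a3 X Y Z hfac hXY hXZ hYZ hX hY hZ,
        case_id a2 a3 D (u (p-1)) hD hcast X Y Z e1 e2 e3 hstar0 hX hY hZ⟩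
    | exact Or.inr (Or.inr ⟨count_one a2 a3 X Y Z hfac hYZ hX hY,
        (case_swap a2 a3 D (u (p-1)) hD hcast hA2ne hA3ne h2ne hA2frob X Y Z e1 e2 e3 hYZ
          hstar0 hX hY hZ).1,
        (case_swap a2 a3 D (u (p-1)) hD hcast hA2ne hA3ne h2ne hA2frob X Y Z e1 e2 e3 hYZ
          hstar0 hX hY hZ).2⟩)
    | exact Or.inr (Or.inr ⟨count_one a2 a3 Z X Y (fun w => by rw [hfac w]; ring) hXY hZ hX,
        (case_swap a2 a3 D (u (p-1)) hD hcast hA2ne hA3ne h2ne hA2frob Z X Y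
          (by linear_combination e1) (by linear_combination e2) (by linear_combination e3) hXY
          (by linear_combination hstar0) hZ hX hY).1,
        (case_swap a2 a3 D (u (p-1)) hD hcast hA2ne hA3ne h2ne hA2frob Z X Y
          (by linear_combination e1) (by linear_combination e2) (by linear_combination e3) hXY
          (by linear_combination hstar0) hZ hX hY).2⟩)
    | exact Or.inr (Or.inr ⟨count_one a2 a3 Y Z X (fun w => by rw [hfac w]; ring)
          (Ne.symm hXZ) hY hZ,
        (case_swap a2 a3 D (u (p-1)) hD hcast hA2ne hA3ne h2ne hA2frob Y Z X
          (by linear_combination e1) (by linear_combination e2) (by linear_combination e3)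
          (Ne.symm hXZ) (by linear_combination hstar0) hY hZ hX).1,
        (case_swap a2 a3 D (u (p-1)) hD hcast hA2ne hA3ne h2ne hA2frob Y Z X
          (by linear_combination e1) (by linear_combination e2) (by linear_combination e3)
          (Ne.symm hXZ) (by linear_combination hstar0) hY hZ hX).2⟩)
    | exact Or.inr (Or.inl ⟨count_zero a2 a3 X Y Z hfac hXY hYZ (Ne.symm hXZ) hX hY hZ,
        case_cyc a2 a3 D (u (p-1)) hD hcast X Y Z e1 e2 e3 hstar0 hX hY hZ⟩)
    | exact Or.inr (Or.inl ⟨count_zero a2 a3 X Z Y (fun w => by rw [hfac w]; ring)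
          hXZ (Ne.symm hYZ) (Ne.symm hXY) hX hZ hY,
        case_cyc a2 a3 D (u (p-1)) hD hcast X Z Y
          (by linear_combination e1) (by linear_combination e2) (by linear_combination e3)
          (by linear_combination -hstar0) hX hZ hY⟩)
end
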